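/- With the above notation, $\delta^2 = \left(A^{(m)}\right)^2 - 4\,\mathbf{F}$ holds in $L$; in particular $\delta^2$ lies in the subfield of $L$ generated by $K$ and the elements $z_n$, $n \in \mathbb{Z}/m\mathbb{Z}$. -/
import Mathlib


/- Setting: `Lm K m` is the field of fractions of the (Laurent) polynomial ring over a field
`K` in commuting variables `yv n` indexed by `n : ZMod m`, with fixed scalars `F n : K`. -/

noncomputable section

variable (K : Type) [Field K] (m : ℕ) [NeZero m]

/-- The ambient field `L`. -/
abbrev Lm := FractionRing (MvPolynomial (ZMod m) K)

/-- The variable `y_n`. -/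
def yv (n : ZMod m) : Lm K m :=
  algebraMap (MvPolynomial (ZMod m) K) (Lm K m) (MvPolynomial.X n)

variable (F : ZMod m → K)

/-- The scalar `F_n` viewed inside `L`. -/
def Fc (n : ZMod m) : Lm K m := algebraMap K (Lm K m) (F n)

/-- `X_n = F_n / (y_n y_{n+1})`. -/
def Xv (n : ZMod m) : Lm K m := Fc K m F n / (yv K m n * yv K m (n + 1))

/-- `P_n = 1 + ∑_{k=0}^{m-2} X_n X_{n-1} ⋯ X_{n-k}`. -/
def Pv (n : ZMod m) : Lm K m :=
  1 + ∑ k ∈ Finset.range (m - 1), ∏ j ∈ Finset.range (k + 1), Xv K m F (n - (j : ZMod m))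

/-- `z_n = y_n (1 + X_n)`. -/
def zv (n : ZMod m) : Lm K m := yv K m n * (1 + Xv K m F n)

/-- `𝐲 = ∏_n y_n`. -/
def boldy : Lm K m := ∏ n : ZMod m, yv K m n

/-- `𝐅 = ∏_n F_n` (viewed in `L`). -/
def boldF : Lm K m := ∏ n : ZMod m, Fc K m F n

/-- `δ = 𝐲 - 𝐅/𝐲`. -/
def deltav : Lm K m := boldy K m - boldF K m F / boldy K m
/-- `C^{(1)} = 1`, `C^{(2)} = z_2`, `C^{(k)} = z_k C^{(k-1)} - F_{k-1} C^{(k-2)}` (indices mod `m`). -/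
def Cv : ℕ → Lm K m
  | 0 => 1
  | 1 => 1
  | 2 => zv K m F ((2 : ℕ) : ZMod m)
  | (k + 3) => zv K m F ((k + 3 : ℕ) : ZMod m) * Cv (k + 2)
      - Fc K m F ((k + 2 : ℕ) : ZMod m) * Cv (k + 1)

/-- The shifted sequence `C_+^{(1)} = 1`, `C_+^{(2)} = z_3`,
`C_+^{(k)} = z_{k+1} C_+^{(k-1)} - F_k C_+^{(k-2)}` (indices mod `m`). -/
def Cpv : ℕ → Lm K m
  | 0 => 1
  | 1 => 1
  | 2 => zv K m F ((3 : ℕ) : ZMod m)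
  | (k + 3) => zv K m F ((k + 4 : ℕ) : ZMod m) * Cpv (k + 2)
      - Fc K m F ((k + 3 : ℕ) : ZMod m) * Cpv (k + 1)

/-- `A^{(m)} = z_1 C^{(m)} - F_m C^{(m-1)} - F_1 C_+^{(m-1)}`. -/
def Av : Lm K m :=
  zv K m F ((1 : ℕ) : ZMod m) * Cv K m F m - Fc K m F ((m : ℕ) : ZMod m) * Cv K m F (m - 1)
    - Fc K m F ((1 : ℕ) : ZMod m) * Cpv K m F (m - 1)


/-! ### Auxiliary definitions and lemmas -/

/-- `U_1 = 1`, `U_{k+1} = 1 + X_{k+1} U_k`. -/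
def Uv : ℕ → Lm K m
  | 0 => 1
  | 1 => 1
  | (k + 2) => 1 + Xv K m F ((k + 2 : ℕ) : ZMod m) * Uv (k + 1)

/-- Shifted version: `U⁺_1 = 1`, `U⁺_{k+1} = 1 + X_{k+2} U⁺_k`. -/
def Upv : ℕ → Lm K m
  | 0 => 1
  | 1 => 1
  | (k + 2) => 1 + Xv K m F ((k + 3 : ℕ) : ZMod m) * Upv (k + 1)

/-- `G_k = y_2 ⋯ y_k`. -/
def Gv (k : ℕ) : Lm K m := ∏ i ∈ Finset.Icc 2 k, yv K m ((i : ℕ) : ZMod m)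

/-- `G⁺_k = y_3 ⋯ y_{k+1}`. -/
def Gpv (k : ℕ) : Lm K m := ∏ i ∈ Finset.Icc 2 k, yv K m ((i + 1 : ℕ) : ZMod m)

lemma yv_ne_zero (n : ZMod m) : yv K m n ≠ 0 := by
  unfold yv
  intro h
  exact MvPolynomial.X_ne_zero (R := K) n
    ((map_eq_zero_iff _
      (IsFractionRing.injective (MvPolynomial (ZMod m) K) (Lm K m))).mp h)

lemma yX (n : ZMod m) :
    yv K m n * yv K m (n + 1) * Xv K m F n = Fc K m F n := by
  rw [Xv, mul_comm, div_mul_cancel₀ _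
    (mul_ne_zero (yv_ne_zero K m n) (yv_ne_zero K m (n + 1)))]

lemma Icc_split_bot {a b : ℕ} (h : a ≤ b) (f : ℕ → Lm K m) :
    ∏ i ∈ Finset.Icc a b, f i = f a * ∏ i ∈ Finset.Icc (a + 1) b, f i := by
  rw [← Finset.Ico_add_one_right_eq_Icc, ← Finset.Ico_add_one_right_eq_Icc,
    Finset.prod_eq_prod_Ico_succ_bot (by omega) f]

lemma prod_Icc_one (f : ZMod m → Lm K m) :
    ∏ i ∈ Finset.Icc 1 m, f ((i : ℕ) : ZMod m) = ∏ n : ZMod m, f n := by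
  have hm0 : 0 < m := Nat.pos_of_ne_zero (NeZero.ne m)
  refine Finset.prod_nbij' (fun i => ((i : ℕ) : ZMod m))
    (fun n => if n.val = 0 then m else n.val) ?_ ?_ ?_ ?_ ?_
  · intro a _; exact Finset.mem_univ _
  · intro n _
    by_cases h : n.val = 0
    · simp only [h, if_pos]
      exact Finset.mem_Icc.mpr ⟨hm0, le_refl m⟩
    · simp only [h, if_neg, if_false]
      exact Finset.mem_Icc.mpr ⟨Nat.one_le_iff_ne_zero.mpr h, le_of_lt (ZMod.val_lt n)⟩
  · intro a ha
    obtain ⟨h1, h2⟩ := Finset.mem_Icc.mp ha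
    show (if ZMod.val ((a : ℕ) : ZMod m) = 0 then m else ZMod.val ((a : ℕ) : ZMod m)) = a
    rcases eq_or_lt_of_le h2 with h | h
    · subst h
      simp [ZMod.natCast_self]
    · rw [ZMod.val_cast_of_lt h]
      rw [if_neg (by omega)]
  · intro n _
    show (((if n.val = 0 then m else n.val : ℕ) : ℕ) : ZMod m) = n
    by_cases h : n.val = 0
    · rw [if_pos h, ZMod.natCast_self]
      exact ((ZMod.val_eq_zero n).mp h).symm
    · rw [if_neg h]
      exact ZMod.natCast_rightInverse n
  · intro a _; rfl

lemma boldy_ne_zero : boldy K m ≠ 0 := by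
  rw [boldy]
  exact Finset.prod_ne_zero_iff.mpr (fun n _ => yv_ne_zero K m n)

lemma prod_Xv : (∏ n : ZMod m, Xv K m F n) * (boldy K m * boldy K m) = boldF K m F := by
  have hden : ∏ n : ZMod m, (yv K m n * yv K m (n + 1)) = boldy K m * boldy K m := by
    rw [Finset.prod_mul_distrib, boldy]
    congr 1
    exact Fintype.prod_equiv (Equiv.addRight (1 : ZMod m)) _ _ (fun x => rfl)
  have h1 : ∏ n : ZMod m, Xv K m F n
      = boldF K m F / (boldy K m * boldy K m) := by
    simp only [Xv]
    rw [Finset.prod_div_distrib, hden, boldF]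
  rw [h1, div_mul_cancel₀]
  exact mul_ne_zero (boldy_ne_zero K m) (boldy_ne_zero K m)

lemma Cv_eq : ∀ k : ℕ, Cv K m F (k + 1) = Gv K m (k + 1) * Uv K m F (k + 1)
  | 0 => by
    show (1 : Lm K m) = Gv K m 1 * Uv K m F 1
    rw [Gv, Finset.Icc_eq_empty (by omega), Finset.prod_empty]
    show (1 : Lm K m) = 1 * 1
    rw [one_mul]
  | 1 => by
    show zv K m F ((2 : ℕ) : ZMod m) = Gv K m 2 * Uv K m F 2
    have hG : Gv K m 2 = yv K m ((2 : ℕ) : ZMod m) := by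
      rw [Gv, Finset.Icc_self, Finset.prod_singleton]
    have hU : Uv K m F 2 = 1 + Xv K m F ((2 : ℕ) : ZMod m) * 1 := rfl
    rw [hG, hU, zv, mul_one]
  | (k + 2) => by
    have ih1 : Cv K m F (k + 2) = Gv K m (k + 2) * Uv K m F (k + 2) := Cv_eq (k + 1)
    have ih2 : Cv K m F (k + 1) = Gv K m (k + 1) * Uv K m F (k + 1) := Cv_eq k
    show Cv K m F (k + 3) = Gv K m (k + 3) * Uv K m F (k + 3)
    have e1 : Cv K m F (k + 3)
        = zv K m F ((k + 3 : ℕ) : ZMod m) * Cv K m F (k + 2)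
          - Fc K m F ((k + 2 : ℕ) : ZMod m) * Cv K m F (k + 1) := rfl
    have e2 : Gv K m (k + 3) = Gv K m (k + 2) * yv K m ((k + 3 : ℕ) : ZMod m) :=
      Finset.prod_Icc_succ_top (by omega) _
    have e3 : Gv K m (k + 2) = Gv K m (k + 1) * yv K m ((k + 2 : ℕ) : ZMod m) :=
      Finset.prod_Icc_succ_top (by omega) _
    have hU3 : Uv K m F (k + 3)
        = 1 + Xv K m F ((k + 3 : ℕ) : ZMod m) * Uv K m F (k + 2) := rfl
    have hU2 : Uv K m F (k + 2)
        = 1 + Xv K m F ((k + 2 : ℕ) : ZMod m) * Uv K m F (k + 1) := rfl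
    have hz : zv K m F ((k + 3 : ℕ) : ZMod m)
        = yv K m ((k + 3 : ℕ) : ZMod m) * (1 + Xv K m F ((k + 3 : ℕ) : ZMod m)) := rfl
    have hX : yv K m ((k + 2 : ℕ) : ZMod m) * yv K m ((k + 3 : ℕ) : ZMod m)
        * Xv K m F ((k + 2 : ℕ) : ZMod m) = Fc K m F ((k + 2 : ℕ) : ZMod m) := by
      have h := yX K m F ((k + 2 : ℕ) : ZMod m)
      rwa [show ((k + 2 : ℕ) : ZMod m) + 1 = ((k + 3 : ℕ) : ZMod m) by push_cast; ring] at h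
    rw [e1, ih1, ih2, e2, e3, hU3, hU2, hz, ← hX]
    ring

lemma Cpv_eq : ∀ k : ℕ, Cpv K m F (k + 1) = Gpv K m (k + 1) * Upv K m F (k + 1)
  | 0 => by
    show (1 : Lm K m) = Gpv K m 1 * Upv K m F 1
    rw [Gpv, Finset.Icc_eq_empty (by omega), Finset.prod_empty]
    show (1 : Lm K m) = 1 * 1
    rw [one_mul]
  | 1 => by
    show zv K m F ((3 : ℕ) : ZMod m) = Gpv K m 2 * Upv K m F 2
    have hG : Gpv K m 2 = yv K m ((3 : ℕ) : ZMod m) := by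
      rw [Gpv, Finset.Icc_self, Finset.prod_singleton]
    have hU : Upv K m F 2 = 1 + Xv K m F ((3 : ℕ) : ZMod m) * 1 := rfl
    rw [hG, hU, zv, mul_one]
  | (k + 2) => by
    have ih1 : Cpv K m F (k + 2) = Gpv K m (k + 2) * Upv K m F (k + 2) := Cpv_eq (k + 1)
    have ih2 : Cpv K m F (k + 1) = Gpv K m (k + 1) * Upv K m F (k + 1) := Cpv_eq k
    show Cpv K m F (k + 3) = Gpv K m (k + 3) * Upv K m F (k + 3)
    have e1 : Cpv K m F (k + 3)
        = zv K m F ((k + 4 : ℕ) : ZMod m) * Cpv K m F (k + 2)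
          - Fc K m F ((k + 3 : ℕ) : ZMod m) * Cpv K m F (k + 1) := rfl
    have e2 : Gpv K m (k + 3) = Gpv K m (k + 2) * yv K m ((k + 4 : ℕ) : ZMod m) :=
      Finset.prod_Icc_succ_top (by omega) _
    have e3 : Gpv K m (k + 2) = Gpv K m (k + 1) * yv K m ((k + 3 : ℕ) : ZMod m) :=
      Finset.prod_Icc_succ_top (by omega) _
    have hU3 : Upv K m F (k + 3)
        = 1 + Xv K m F ((k + 4 : ℕ) : ZMod m) * Upv K m F (k + 2) := rfl
    have hU2 : Upv K m F (k + 2)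
        = 1 + Xv K m F ((k + 3 : ℕ) : ZMod m) * Upv K m F (k + 1) := rfl
    have hz : zv K m F ((k + 4 : ℕ) : ZMod m)
        = yv K m ((k + 4 : ℕ) : ZMod m) * (1 + Xv K m F ((k + 4 : ℕ) : ZMod m)) := rfl
    have hX : yv K m ((k + 3 : ℕ) : ZMod m) * yv K m ((k + 4 : ℕ) : ZMod m)
        * Xv K m F ((k + 3 : ℕ) : ZMod m) = Fc K m F ((k + 3 : ℕ) : ZMod m) := by
      have h := yX K m F ((k + 3 : ℕ) : ZMod m)
      rwa [show ((k + 3 : ℕ) : ZMod m) + 1 = ((k + 4 : ℕ) : ZMod m) by push_cast; ring] at h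
    rw [e1, ih1, ih2, e2, e3, hU3, hU2, hz, ← hX]
    ring

lemma Udiff : ∀ k : ℕ, Uv K m F (k + 2) - Upv K m F (k + 1)
    = ∏ i ∈ Finset.Icc 2 (k + 2), Xv K m F ((i : ℕ) : ZMod m)
  | 0 => by
    have hU : Uv K m F 2 = 1 + Xv K m F ((2 : ℕ) : ZMod m) * 1 := rfl
    have hUp : Upv K m F 1 = 1 := rfl
    rw [hU, hUp, Finset.Icc_self, Finset.prod_singleton]
    ring
  | (k + 1) => by
    have ih := Udiff k
    have hU : Uv K m F (k + 3)
        = 1 + Xv K m F ((k + 3 : ℕ) : ZMod m) * Uv K m F (k + 2) := rfl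
    have hUp : Upv K m F (k + 2)
        = 1 + Xv K m F ((k + 3 : ℕ) : ZMod m) * Upv K m F (k + 1) := rfl
    have hp : ∏ i ∈ Finset.Icc 2 (k + 3), Xv K m F ((i : ℕ) : ZMod m)
        = (∏ i ∈ Finset.Icc 2 (k + 2), Xv K m F ((i : ℕ) : ZMod m))
          * Xv K m F ((k + 3 : ℕ) : ZMod m) :=
      Finset.prod_Icc_succ_top (by omega) _
    show Uv K m F (k + 3) - Upv K m F (k + 2) = _
    rw [hU, hUp, hp, ← ih]
    ring

lemma Cv_mem : ∀ k : ℕ,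
    Cv K m F k ∈ IntermediateField.adjoin K (Set.range (zv K m F))
  | 0 => one_mem _
  | 1 => one_mem _
  | 2 => IntermediateField.subset_adjoin K _ (Set.mem_range_self _)
  | (k + 3) => by
    have h1 := Cv_mem (k + 2)
    have h2 := Cv_mem (k + 1)
    show zv K m F ((k + 3 : ℕ) : ZMod m) * Cv K m F (k + 2)
      - Fc K m F ((k + 2 : ℕ) : ZMod m) * Cv K m F (k + 1) ∈ _
    exact sub_mem
      (mul_mem (IntermediateField.subset_adjoin K _ (Set.mem_range_self _)) h1)
      (mul_mem (IntermediateField.algebraMap_mem _ _) h2)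

lemma Cpv_mem : ∀ k : ℕ,
    Cpv K m F k ∈ IntermediateField.adjoin K (Set.range (zv K m F))
  | 0 => one_mem _
  | 1 => one_mem _
  | 2 => IntermediateField.subset_adjoin K _ (Set.mem_range_self _)
  | (k + 3) => by
    have h1 := Cpv_mem (k + 2)
    have h2 := Cpv_mem (k + 1)
    show zv K m F ((k + 4 : ℕ) : ZMod m) * Cpv K m F (k + 2)
      - Fc K m F ((k + 3 : ℕ) : ZMod m) * Cpv K m F (k + 1) ∈ _
    exact sub_mem
      (mul_mem (IntermediateField.subset_adjoin K _ (Set.mem_range_self _)) h1)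
      (mul_mem (IntermediateField.algebraMap_mem _ _) h2)

lemma A_eq (hm : 2 ≤ m) : Av K m F = boldy K m + boldF K m F / boldy K m := by
  obtain ⟨k, rfl⟩ : ∃ k, m = k + 2 := ⟨m - 2, by omega⟩
  have hY : boldy K (k + 2) ≠ 0 := boldy_ne_zero K (k + 2)
  have hC2 : Cv K (k + 2) F (k + 2)
      = Gv K (k + 2) (k + 2) * Uv K (k + 2) F (k + 2) := Cv_eq K (k + 2) F (k + 1)
  have hC1 : Cv K (k + 2) F (k + 1)
      = Gv K (k + 2) (k + 1) * Uv K (k + 2) F (k + 1) := Cv_eq K (k + 2) F k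
  have hCp : Cpv K (k + 2) F (k + 1)
      = Gpv K (k + 2) (k + 1) * Upv K (k + 2) F (k + 1) := Cpv_eq K (k + 2) F k
  have hAv : Av K (k + 2) F
      = zv K (k + 2) F ((1 : ℕ) : ZMod (k + 2)) * Cv K (k + 2) F (k + 2)
        - Fc K (k + 2) F ((k + 2 : ℕ) : ZMod (k + 2)) * Cv K (k + 2) F (k + 1)
        - Fc K (k + 2) F ((1 : ℕ) : ZMod (k + 2)) * Cpv K (k + 2) F (k + 1) := rfl
  have h9 : Gv K (k + 2) (k + 2)
      = Gv K (k + 2) (k + 1) * yv K (k + 2) ((k + 2 : ℕ) : ZMod (k + 2)) :=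
    Finset.prod_Icc_succ_top (by omega) _
  have h1 : yv K (k + 2) ((1 : ℕ) : ZMod (k + 2)) * Gv K (k + 2) (k + 2)
      = boldy K (k + 2) := by
    rw [boldy, ← prod_Icc_one K (k + 2) (fun n => yv K (k + 2) n),
      Icc_split_bot K (k + 2) (show 1 ≤ k + 2 by omega)]
    rfl
  have h1' : yv K (k + 2) ((1 : ℕ) : ZMod (k + 2))
      * (Gv K (k + 2) (k + 1) * yv K (k + 2) ((k + 2 : ℕ) : ZMod (k + 2)))
      = boldy K (k + 2) := by rw [← h9]; exact h1
  have hmap : ∏ i ∈ Finset.Icc 3 (k + 2), yv K (k + 2) ((i : ℕ) : ZMod (k + 2))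
      = Gpv K (k + 2) (k + 1) := by
    rw [Gpv, show (3 : ℕ) = 2 + 1 from rfl, show k + 2 = (k + 1) + 1 from rfl,
      ← Finset.map_add_right_Icc, Finset.prod_map]
    rfl
  have h2 : yv K (k + 2) ((2 : ℕ) : ZMod (k + 2)) * Gpv K (k + 2) (k + 1)
      = Gv K (k + 2) (k + 1) * yv K (k + 2) ((k + 2 : ℕ) : ZMod (k + 2)) := by
    rw [← h9, ← hmap, Gv, Icc_split_bot K (k + 2) (show 2 ≤ k + 2 by omega)]
  have h7 : Uv K (k + 2) F (k + 2)
      = 1 + Xv K (k + 2) F ((k + 2 : ℕ) : ZMod (k + 2)) * Uv K (k + 2) F (k + 1) := rfl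
  have h3 : Upv K (k + 2) F (k + 1)
      = Uv K (k + 2) F (k + 2)
        - ∏ i ∈ Finset.Icc 2 (k + 2), Xv K (k + 2) F ((i : ℕ) : ZMod (k + 2)) := by
    linear_combination -(Udiff K (k + 2) F k)
  have hX1 : yv K (k + 2) ((1 : ℕ) : ZMod (k + 2)) * yv K (k + 2) ((2 : ℕ) : ZMod (k + 2))
      * Xv K (k + 2) F ((1 : ℕ) : ZMod (k + 2)) = Fc K (k + 2) F ((1 : ℕ) : ZMod (k + 2)) := by
    have h := yX K (k + 2) F ((1 : ℕ) : ZMod (k + 2))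
    rwa [show ((1 : ℕ) : ZMod (k + 2)) + 1 = ((2 : ℕ) : ZMod (k + 2)) by push_cast; ring] at h
  have hXm : yv K (k + 2) ((k + 2 : ℕ) : ZMod (k + 2)) * yv K (k + 2) ((1 : ℕ) : ZMod (k + 2))
      * Xv K (k + 2) F ((k + 2 : ℕ) : ZMod (k + 2))
      = Fc K (k + 2) F ((k + 2 : ℕ) : ZMod (k + 2)) := by
    have h := yX K (k + 2) F ((k + 2 : ℕ) : ZMod (k + 2))
    rwa [show ((k + 2 : ℕ) : ZMod (k + 2)) + 1 = ((1 : ℕ) : ZMod (k + 2)) by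
      rw [ZMod.natCast_self]; push_cast; ring] at h
  have h4 : Xv K (k + 2) F ((1 : ℕ) : ZMod (k + 2))
      * (∏ i ∈ Finset.Icc 2 (k + 2), Xv K (k + 2) F ((i : ℕ) : ZMod (k + 2)))
      * (boldy K (k + 2) * boldy K (k + 2)) = boldF K (k + 2) F := by
    rw [← Icc_split_bot K (k + 2) (show 1 ≤ k + 2 by omega)
        (fun i => Xv K (k + 2) F ((i : ℕ) : ZMod (k + 2))),
      prod_Icc_one K (k + 2) (fun n => Xv K (k + 2) F n)]
    exact prod_Xv K (k + 2) F
  have hz : zv K (k + 2) F ((1 : ℕ) : ZMod (k + 2))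
      = yv K (k + 2) ((1 : ℕ) : ZMod (k + 2))
        * (1 + Xv K (k + 2) F ((1 : ℕ) : ZMod (k + 2))) := rfl
  apply mul_right_cancel₀ hY
  rw [add_mul, div_mul_cancel₀ _ hY]
  rw [hAv, hC2, hC1, hCp, hz, ← hXm, ← hX1, h9, h3, h7]
  linear_combination
    (-(yv K (k + 2) ((1 : ℕ) : ZMod (k + 2)) * Xv K (k + 2) F ((1 : ℕ) : ZMod (k + 2))
      * ((1 + Xv K (k + 2) F ((k + 2 : ℕ) : ZMod (k + 2)) * Uv K (k + 2) F (k + 1))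
        - ∏ i ∈ Finset.Icc 2 (k + 2), Xv K (k + 2) F ((i : ℕ) : ZMod (k + 2)))
      * boldy K (k + 2))) * h2
    + ((1 + Xv K (k + 2) F ((1 : ℕ) : ZMod (k + 2))
        * ∏ i ∈ Finset.Icc 2 (k + 2), Xv K (k + 2) F ((i : ℕ) : ZMod (k + 2)))
      * boldy K (k + 2)) * h1'
    + h4

/-- `δ² = (A^{(m)})² - 4𝐅` in `L`; in particular `δ²` lies in the subfield of `L`
generated by `K` and the `z_n`. -/
theorem stmt_5 (hm : 2 ≤ m) (hF : ∀ n, F n ≠ 0) :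
    deltav K m F ^ 2 = Av K m F ^ 2 - 4 * boldF K m F ∧
      deltav K m F ^ 2 ∈ IntermediateField.adjoin K (Set.range (zv K m F)) := by
  have hY : boldy K m ≠ 0 := boldy_ne_zero K m
  have heq : deltav K m F ^ 2 = Av K m F ^ 2 - 4 * boldF K m F := by
    rw [deltav, A_eq K m F hm]
    field_simp
    ring
  refine ⟨heq, ?_⟩
  rw [heq]
  have hAmem : Av K m F ∈ IntermediateField.adjoin K (Set.range (zv K m F)) := by
    show zv K m F ((1 : ℕ) : ZMod m) * Cv K m F m
        - Fc K m F ((m : ℕ) : ZMod m) * Cv K m F (m - 1)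
        - Fc K m F ((1 : ℕ) : ZMod m) * Cpv K m F (m - 1) ∈ _
    exact sub_mem
      (sub_mem
        (mul_mem (IntermediateField.subset_adjoin K _ (Set.mem_range_self _))
          (Cv_mem K m F m))
        (mul_mem (IntermediateField.algebraMap_mem _ _) (Cv_mem K m F (m - 1))))
      (mul_mem (IntermediateField.algebraMap_mem _ _) (Cpv_mem K m F (m - 1)))
  have hFmem : boldF K m F ∈ IntermediateField.adjoin K (Set.range (zv K m F)) := by
    rw [boldF]
    exact prod_mem (fun n _ => IntermediateField.algebraMap_mem _ _)
  have h4 : (4 : Lm K m) ∈ IntermediateField.adjoin K (Set.range (zv K m F)) := by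
    rw [show (4 : Lm K m) = algebraMap K (Lm K m) 4 from (map_ofNat _ 4).symm]
    exact IntermediateField.algebraMap_mem _ _
  exact sub_mem (pow_mem hAmem 2) (mul_mem h4 hFmem)
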